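/- (Lemma 2 of the paper.) Let DB be an uncertain database all of whose existential probabilities are nonnegative. Then for every nonempty pattern α, expSup^cap(α) ≤ expSupport^top(α); that is, the upper bound expSup^cap used by FUWS is always at most the upper bound expSupport^top used by uWSequence. -/

import Mathlib

/-!
For each sequence `S'` of `D = DB|α_{m-1}`, the single-item occurrence probability
`maxPr_{S'}([i_m])` is `0` when `i_m` does not occur in `S'`, and otherwise at most
`P̂_D(i_m)`, the maximum over all entries of `D` with item `i_m`. Summing over `D` bounds
`Σ_{S'} maxPr_{S'}([i_m])` by `P̂_D(i_m) · sup_{i_m}`, and the common factor `maxPr(α_{m-1})`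
is nonnegative because projection only keeps suffixes of sequences of `DB`.
-/

variable {I : Type*}

/-- An uncertain sequence: a finite list of (item, existential probability) pairs. -/
abbrev USeq (I : Type*) := List (I × ℝ)

/-- An uncertain database: a finite list of uncertain sequences. -/
abbrev UDB (I : Type*) := List (USeq I)

/-- `α` occurs in `S`: some sublist of `S` has item list `α`. -/
def Occurs (α : List I) (S : USeq I) : Prop :=
  ∃ o : USeq I, o.Sublist S ∧ o.map Prod.fst = α

/-- Maximum occurrence probability of pattern `α` in `S`
(`0` if `α` has no occurrence in `S`; `1` for the empty pattern). -/
noncomputable def maxPrS [DecidableEq I] (α : List I) (S : USeq I) : ℝ :=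
  (((S.sublists.filter fun o => decide (o.map Prod.fst = α)).map
      fun o => (o.map Prod.snd).prod).maximum).getD 0

/-- Greedy projection: `projSeq α S = some S'` iff `α` occurs in `S`, in which case `S'`
is the suffix of `S` strictly after the last matched position of the greedy (leftmost)
occurrence of `α` in `S`.  For the empty pattern it is `S` itself. -/
def projSeq [DecidableEq I] : List I → USeq I → Option (USeq I)
  | [], S => some S
  | _ :: _, [] => none
  | i :: α, (x, _) :: rest =>
      if x = i then projSeq α rest else projSeq (i :: α) rest

/-- The projected database `DB|α`. -/
def projDB [DecidableEq I] (α : List I) (DB : UDB I) : UDB I :=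
  DB.filterMap (projSeq α)

/-- `P̂_D(i)`: maximum probability of an entry with item `i` over all sequences of `D`
(`0` if `i` occurs in no sequence of `D`). -/
noncomputable def Phat [DecidableEq I] (D : UDB I) (i : I) : ℝ :=
  (((D.flatten.filter fun e => decide (e.1 = i)).map Prod.snd).maximum).getD 0

/-- `maxPr(α)` relative to `DB`: the product of per-step maximum probabilities over the
successively projected databases. -/
noncomputable def maxPrDB [DecidableEq I] (DB : UDB I) (α : List I) : ℝ :=
  ∏ k : Fin α.length, Phat (projDB (α.take k.val) DB) (α.get k)

/-- Expected support of `α` in `DB`. -/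
noncomputable def expSup [DecidableEq I] (DB : UDB I) (α : List I) : ℝ :=
  (DB.map fun S => maxPrS α S).sum

/-- `expSup^cap` of a nonempty pattern (junk value `0` on the empty pattern). -/
noncomputable def expSupCap [DecidableEq I] (DB : UDB I) (α : List I) : ℝ :=
  match α.getLast? with
  | none => 0
  | some i =>
      maxPrDB DB α.dropLast *
        ((projDB α.dropLast DB).map fun S' => maxPrS [i] S').sum

/-- Number of sequences of `D` in which item `i` occurs. -/
def supCount [DecidableEq I] (D : UDB I) (i : I) : ℕ :=
  (D.filter fun S => decide (i ∈ S.map Prod.fst)).length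

/-- `expSupport^top` of a nonempty pattern (junk value `0` on the empty pattern). -/
noncomputable def expSupTop [DecidableEq I] (DB : UDB I) (α : List I) : ℝ :=
  match α.getLast? with
  | none => 0
  | some i =>
      maxPrDB DB α.dropLast * Phat (projDB α.dropLast DB) i *
        (supCount (projDB α.dropLast DB) i : ℝ)

/-- Item `i` occurs in some sequence of `D`. -/
def ItemOccursIn (D : UDB I) (i : I) : Prop :=
  ∃ S ∈ D, i ∈ S.map Prod.fst

/-- `sWeight`: average weight of the items of a pattern. -/
noncomputable def sWeight (w : I → ℝ) (α : List I) : ℝ :=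
  (α.map w).sum / (α.length : ℝ)

/-- Maximum weight among the items of a pattern (`0` for the empty pattern). -/
noncomputable def mxWs (w : I → ℝ) (α : List I) : ℝ :=
  ((α.map w).maximum).getD 0

/-- Maximum weight among items occurring in some sequence of `D` (`0` if none). -/
noncomputable def mxWDB (w : I → ℝ) (D : UDB I) : ℝ :=
  ((D.flatten.map fun e => w e.1).maximum).getD 0

/-- `wgt^cap`. -/
noncomputable def wgtCap [DecidableEq I] (DB : UDB I) (w : I → ℝ) (α : List I) : ℝ :=
  max (mxWDB w (projDB α.dropLast DB)) (mxWs w α)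

/-- Weighted expected support. -/
noncomputable def WES [DecidableEq I] (DB : UDB I) (w : I → ℝ) (α : List I) : ℝ :=
  expSup DB α * sWeight w α

/-- `wExpSup^cap`. -/
noncomputable def wExpSupCap [DecidableEq I] (DB : UDB I) (w : I → ℝ) (α : List I) : ℝ :=
  expSupCap DB α * wgtCap DB w α

namespace List

variable {α : Type*}

theorem getD_maximum_mem_cons [LinearOrder α] (l : List α) (d : α) :
    l.maximum.getD d ∈ d :: l := by
  cases h : l.maximum with
  | bot => exact mem_cons_self
  | coe m => exact mem_cons_of_mem d (maximum_mem h)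

theorem le_getD_maximum_of_mem [LinearOrder α] {l : List α} {a : α} (d : α) (ha : a ∈ l) :
    a ≤ l.maximum.getD d := by
  cases h : l.maximum with
  | bot => exact absurd ha (by simp [maximum_eq_bot.mp h])
  | coe m => exact le_maximum_of_mem ha h

theorem sum_map_le_length_filter_nsmul {β M : Type*} [AddCommMonoid M] [PartialOrder M]
    [IsOrderedAddMonoid M] {f : β → M} {p : β → Bool} {b : M} (l : List β)
    (hp : ∀ x ∈ l, p x → f x ≤ b) (hnp : ∀ x ∈ l, p x = false → f x ≤ 0) :
    (l.map f).sum ≤ (l.filter p).length • b := by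
  induction l with
  | nil => simp
  | cons x l ih =>
    have ih := ih (fun y hy => hp y (mem_cons_of_mem x hy))
      (fun y hy => hnp y (mem_cons_of_mem x hy))
    cases hx : p x
    · simpa [hx] using add_le_add (hnp x mem_cons_self hx) ih
    · simpa [hx, succ_nsmul'] using add_le_add (hp x mem_cons_self hx) ih

end List

section

variable [DecidableEq I]

theorem projSeq_suffix {α : List I} {S S' : USeq I} (h : projSeq α S = some S') : S' <:+ S := by
  induction α generalizing S with
  | nil => simp_all [projSeq]
  | cons i α ihα =>
    induction S with
    | nil => simp [projSeq] at h
    | cons e rest ihS =>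
      simp only [projSeq] at h
      split at h
      · exact (ihα h).trans (List.suffix_cons _ _)
      · exact (ihS h).trans (List.suffix_cons _ _)

theorem projDB_nonneg {DB : UDB I} (hp : ∀ S ∈ DB, ∀ e ∈ S, 0 ≤ e.2) (α : List I) :
    ∀ S' ∈ projDB α DB, ∀ e ∈ S', 0 ≤ e.2 := by
  intro S' hS' e he
  obtain ⟨S, hS, hproj⟩ := List.mem_filterMap.mp hS'
  exact hp S hS e ((projSeq_suffix hproj).subset he)

theorem Phat_nonneg {D : UDB I} (hD : ∀ S ∈ D, ∀ e ∈ S, 0 ≤ e.2) (i : I) : 0 ≤ Phat D i := by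
  have hmem := List.getD_maximum_mem_cons
    ((D.flatten.filter fun e => decide (e.1 = i)).map Prod.snd) 0
  simp only [List.mem_cons, List.mem_map, List.mem_filter, List.mem_flatten] at hmem
  rcases hmem with h | ⟨e, ⟨⟨S, hS, he⟩, -⟩, h⟩
  · exact h.ge
  · exact (hD S hS e he).trans_eq h

theorem le_Phat {D : UDB I} {S : USeq I} {e : I × ℝ} (hS : S ∈ D) (he : e ∈ S) :
    e.2 ≤ Phat D e.1 :=
  List.le_getD_maximum_of_mem 0 <|
    List.mem_map_of_mem <| List.mem_filter.mpr ⟨List.mem_flatten.mpr ⟨S, hS, he⟩, by simp⟩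

theorem maxPrDB_nonneg {DB : UDB I} (hp : ∀ S ∈ DB, ∀ e ∈ S, 0 ≤ e.2) (α : List I) :
    0 ≤ maxPrDB DB α :=
  Finset.prod_nonneg fun _ _ => Phat_nonneg (projDB_nonneg hp _) _

theorem maxPrS_singleton_le {S : USeq I} {i : I} {b : ℝ} (hb : 0 ≤ b)
    (h : ∀ e ∈ S, e.1 = i → e.2 ≤ b) : maxPrS [i] S ≤ b := by
  have hmem := List.getD_maximum_mem_cons
    ((S.sublists.filter fun o => decide (o.map Prod.fst = [i])).map
      fun o => (o.map Prod.snd).prod) 0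
  simp only [List.mem_cons, List.mem_map, List.mem_filter, List.mem_sublists,
    decide_eq_true_eq, List.map_eq_singleton_iff] at hmem
  rcases hmem with h0 | ⟨o, ⟨hsub, e, rfl, hei⟩, hprod⟩
  · exact h0.le.trans hb
  · rw [maxPrS, ← hprod]
    simpa using h e (hsub.subset List.mem_cons_self) hei

theorem maxPrS_singleton_of_not_mem {S : USeq I} {i : I} (h : i ∉ S.map Prod.fst) :
    maxPrS [i] S = 0 := by
  have hnil : (S.sublists.filter fun o => decide (o.map Prod.fst = [i])) = [] := by
    refine List.filter_eq_nil_iff.mpr fun o ho hmap => h ?_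
    exact ((List.mem_sublists.mp ho).map Prod.fst).subset (by simp [of_decide_eq_true hmap])
  rw [maxPrS, hnil]
  rfl

theorem sum_maxPrS_singleton_le {D : UDB I} (hD : ∀ S ∈ D, ∀ e ∈ S, 0 ≤ e.2) (i : I) :
    (D.map (maxPrS [i])).sum ≤ Phat D i * supCount D i :=
  calc (D.map (maxPrS [i])).sum
      ≤ (D.filter fun S => decide (i ∈ S.map Prod.fst)).length • Phat D i :=
        List.sum_map_le_length_filter_nsmul D
          (fun _ hS _ => maxPrS_singleton_le (Phat_nonneg hD i) fun _ he hei => hei ▸ le_Phat hS he)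
          (fun _ _ hi => (maxPrS_singleton_of_not_mem (by simpa using hi)).le)
    _ = Phat D i * supCount D i := by rw [nsmul_eq_mul, mul_comm]; rfl

end

theorem expSupCap_le_expSupTop_general [DecidableEq I]
    (DB : UDB I) (hp : ∀ S ∈ DB, ∀ e ∈ S, 0 ≤ e.2)
    (α : List I) :
    expSupCap DB α ≤ expSupTop DB α := by
  cases hlast : α.getLast? with
  | none => simp [expSupCap, expSupTop, hlast]
  | some i =>
    simp only [expSupCap, expSupTop, hlast, mul_assoc]
    exact mul_le_mul_of_nonneg_left (sum_maxPrS_singleton_le (projDB_nonneg hp _) i)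
      (maxPrDB_nonneg hp _)

/-- Lemma 2: if all probabilities of `DB` are nonnegative, then for every nonempty
pattern `α`, `expSup^cap(α) ≤ expSupport^top(α)`. -/
theorem expSupCap_le_expSupTop [DecidableEq I]
    (DB : UDB I) (hp : ∀ S ∈ DB, ∀ e ∈ S, 0 ≤ e.2)
    (α : List I) (hα : α ≠ []) :
    expSupCap DB α ≤ expSupTop DB α :=
  expSupCap_le_expSupTop_general DB hp α
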